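/- Let G be a finite cyclic group. Then G has property B if and only if the order of G is a prime power (possibly 1). -/

import Mathlib

/-- A subset `X` of a group `G` is a minimal generating set if it generates `G`
and no proper subset of `X` generates `G`. -/
def IsMinimalGenSet {G : Type*} [Group G] (X : Set G) : Prop :=
  Subgroup.closure X = ⊤ ∧ ∀ Y : Set G, Y ⊂ X → Subgroup.closure Y ≠ ⊤

/-- A group has property `B` if all its minimal generating sets have the same size. -/
def HasPropB (G : Type*) [Group G] : Prop :=
  ∀ X Y : Set G, IsMinimalGenSet X → IsMinimalGenSet Y → X.ncard = Y.ncard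

/-- `dGen G` is the smallest size of a minimal generating set of `G`. -/
noncomputable def dGen (G : Type*) [Group G] : ℕ :=
  sInf {n | ∃ X : Set G, IsMinimalGenSet X ∧ X.ncard = n}

/-- `mGen G` is the largest size of a minimal generating set of `G`. -/
noncomputable def mGen (G : Type*) [Group G] : ℕ :=
  sSup {n | ∃ X : Set G, IsMinimalGenSet X ∧ X.ncard = n}

/-!
In a cyclic group of order `p ^ k` with `k ≠ 0`, an element that does not generate the group lies
in the proper subgroup generated by `g ^ p`, where `g` is a generator; so every minimal generating
set contains a generator and is therefore a singleton. If the order is `a * b` with `a, b ≠ 1`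
coprime, then `{g}` and `{g ^ b, g ^ a}` are minimal generating sets of different sizes.
-/

open Subgroup

theorem Nat.exists_coprime_mul_eq_of_not_prime_power {n : ℕ} (hn : n ≠ 0)
    (h : ¬∃ p k : ℕ, p.Prime ∧ n = p ^ k) :
    ∃ a b : ℕ, a ≠ 1 ∧ b ≠ 1 ∧ a.Coprime b ∧ a * b = n := by
  have hn1 : n ≠ 1 := fun h1 => h ⟨2, 0, Nat.prime_two, h1⟩
  have hp := Nat.minFac_prime hn1
  have hprod := Nat.ordProj_mul_ordCompl_eq_self n n.minFac
  refine ⟨_, _, ?_, ?_, (Nat.coprime_ordCompl hp hn).pow_left _, hprod⟩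
  · rw [Ne, Nat.pow_eq_one, not_or]
    exact ⟨hp.ne_one, (hp.factorization_pos_of_dvd hn n.minFac_dvd).ne'⟩
  · intro hb
    rw [hb, mul_one] at hprod
    exact h ⟨_, _, hp, hprod.symm⟩

section MinimalGenSet

variable {G : Type*} [Group G] {X : Set G} {x y : G}

theorem isMinimalGenSet_iff :
    IsMinimalGenSet X ↔ closure X = ⊤ ∧ ∀ x ∈ X, closure (X \ {x}) ≠ ⊤ := by
  refine ⟨fun hX => ⟨hX.1, fun x hx => hX.2 _ (Set.sdiff_singleton_ssubset.2 hx)⟩,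
    fun ⟨hX, hmin⟩ => ⟨hX, fun Y hY hYtop => ?_⟩⟩
  obtain ⟨x, hxX, hxY⟩ := Set.exists_of_ssubset hY
  refine hmin x hxX (top_unique ?_)
  rw [← hYtop]
  exact closure_mono fun y hy => ⟨hY.subset hy, fun hyx => hxY (hyx ▸ hy)⟩

theorem IsMinimalGenSet.eq_empty [Subsingleton G] (hX : IsMinimalGenSet X) : X = ∅ :=
  Set.eq_empty_of_forall_notMem fun x hx =>
    (isMinimalGenSet_iff.1 hX).2 x hx (Subsingleton.elim _ _)

theorem IsMinimalGenSet.eq_singleton_of_zpowers_eq_top (hX : IsMinimalGenSet X) (hx : x ∈ X)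
    (htop : zpowers x = ⊤) : X = {x} := by
  refine Set.eq_singleton_iff_unique_mem.2 ⟨hx, fun y hy => by_contra fun hyx => ?_⟩
  refine (isMinimalGenSet_iff.1 hX).2 y hy (top_unique ?_)
  rw [← htop, zpowers_le]
  exact subset_closure ⟨hx, Ne.symm hyx⟩

theorem isMinimalGenSet_singleton (htop : zpowers x = ⊤) (hx : x ≠ 1) :
    IsMinimalGenSet {x} := by
  refine isMinimalGenSet_iff.2 ⟨by rw [← zpowers_eq_closure, htop], ?_⟩
  intro y hy
  rw [Set.mem_singleton_iff.1 hy, Set.sdiff_self, Subgroup.closure_empty]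
  exact fun hbot => hx (mem_bot.1 (hbot ▸ mem_top x))

theorem ne_of_coprime_orderOf (hxy : (orderOf x).Coprime (orderOf y)) (hx : orderOf x ≠ 1) :
    x ≠ y := by
  rintro rfl
  exact hx ((Nat.coprime_self _).1 hxy)

theorem isMinimalGenSet_pair [Finite G] (hxy : (orderOf x).Coprime (orderOf y))
    (hx : orderOf x ≠ 1) (hy : orderOf y ≠ 1) (hcard : orderOf x * orderOf y = Nat.card G) :
    IsMinimalGenSet {x, y} := by
  have hne := ne_of_coprime_orderOf hxy hx
  have hdvd {z : G} (hz : z ∈ closure {x, y}) : orderOf z ∣ Nat.card (closure {x, y}) := by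
    rw [← orderOf_mk z hz]
    exact orderOf_dvd_natCard _
  refine isMinimalGenSet_iff.2 ⟨eq_top_of_card_eq _ (Nat.dvd_antisymm (card_subgroup_dvd_card _)
      (hcard ▸ hxy.mul_dvd_of_dvd_of_dvd (hdvd (subset_closure (by simp)))
        (hdvd (subset_closure (by simp))))), ?_⟩
  rintro z (rfl | rfl) htop
  · rw [Set.pair_sdiff_left hne, ← zpowers_eq_closure] at htop
    rw [← orderOf_eq_card_of_zpowers_eq_top htop, Nat.mul_eq_right (orderOf_pos _).ne'] at hcard
    exact hx hcard
  · rw [Set.pair_sdiff_right hne, ← zpowers_eq_closure] at htop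
    rw [← orderOf_eq_card_of_zpowers_eq_top htop, Nat.mul_eq_left (orderOf_pos _).ne'] at hcard
    exact hy hcard

end MinimalGenSet

section Cyclic

variable {G : Type*} [Group G] {p k : ℕ}

theorem mem_zpowers_pow_or_pow_mem_zpowers_pow_prime (g : G) (hp : p.Prime)
    (hg : orderOf g = p ^ k) (a : ℕ) : g ∈ zpowers (g ^ a) ∨ g ^ a ∈ zpowers (g ^ p) := by
  by_cases hpa : p ∣ a
  · obtain ⟨c, rfl⟩ := hpa
    exact Or.inr (pow_mul g p c ▸ npow_mem_zpowers _ _)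
  · rw [mem_zpowers_pow_iff, hg]
    exact Or.inl (((hp.coprime_iff_not_dvd).2 hpa).symm.pow_right k)

theorem IsMinimalGenSet.exists_eq_singleton_of_card_eq_prime_pow [Finite G] [IsCyclic G]
    {X : Set G} (hp : p.Prime) (hk : k ≠ 0) (hcard : Nat.card G = p ^ k)
    (hX : IsMinimalGenSet X) : ∃ x, X = {x} := by
  obtain ⟨g, hg⟩ := isCyclic_iff_exists_zpowers_eq_top.1 ‹_›
  have hord : orderOf g = p ^ k := (orderOf_eq_card_of_zpowers_eq_top hg).trans hcard
  have hgp : g ∉ zpowers (g ^ p) := by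
    rw [mem_zpowers_pow_iff, hord, Nat.gcd_eq_left (dvd_pow_self p hk)]
    exact hp.ne_one
  have hXgp : ¬X ⊆ zpowers (g ^ p) := fun hsub =>
    hgp ((closure_le _).2 hsub (hX.1 ▸ mem_top g))
  obtain ⟨x, hxX, hxgp⟩ := Set.not_subset.1 hXgp
  obtain ⟨a, rfl⟩ := mem_powers_iff_mem_zpowers.2 (hg ▸ mem_top x)
  have htop : zpowers (g ^ a) = ⊤ :=
    (mem_zpowers_pow_or_pow_mem_zpowers_pow_prime g hp hord a).elim
      (fun h => top_unique (hg ▸ zpowers_le.2 h)) (absurd · hxgp)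
  exact ⟨_, hX.eq_singleton_of_zpowers_eq_top hxX htop⟩

theorem IsCyclic.hasPropB_of_card_eq_prime_pow [Finite G] [IsCyclic G] (hp : p.Prime)
    (hcard : Nat.card G = p ^ k) : HasPropB G := by
  intro X Y hX hY
  rcases eq_or_ne k 0 with rfl | hk
  · have : Subsingleton G := (Nat.card_eq_one_iff_unique.1 (pow_zero p ▸ hcard)).1
    rw [hX.eq_empty, hY.eq_empty]
  · obtain ⟨x, rfl⟩ := hX.exists_eq_singleton_of_card_eq_prime_pow hp hk hcard
    obtain ⟨y, rfl⟩ := hY.exists_eq_singleton_of_card_eq_prime_pow hp hk hcard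
    rw [Set.ncard_singleton, Set.ncard_singleton]

theorem IsCyclic.not_hasPropB_of_coprime_mul_eq_card [Finite G] [IsCyclic G] {a b : ℕ}
    (ha : a ≠ 1) (hb : b ≠ 1) (hab : a.Coprime b) (hcard : a * b = Nat.card G) :
    ¬HasPropB G := by
  obtain ⟨g, hg⟩ := isCyclic_iff_exists_zpowers_eq_top.1 ‹_›
  have hord : orderOf g = a * b := (orderOf_eq_card_of_zpowers_eq_top hg).trans hcard.symm
  obtain ⟨ha0, hb0⟩ : a ≠ 0 ∧ b ≠ 0 := mul_ne_zero_iff.1 (hcard ▸ Nat.card_pos.ne')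
  have hga : orderOf (g ^ b) = a := by
    rw [orderOf_pow_of_dvd hb0 (hord ▸ dvd_mul_left b a), hord, Nat.mul_div_cancel _ hb0.bot_lt]
  have hgb : orderOf (g ^ a) = b := by
    rw [orderOf_pow_of_dvd ha0 (hord ▸ dvd_mul_right a b), hord,
      Nat.mul_div_cancel_left _ ha0.bot_lt]
  have hg1 : g ≠ 1 := fun h => by
    rw [h, orderOf_one] at hord
    exact ha (Nat.eq_one_of_mul_eq_one_right hord.symm)
  have hcop : (orderOf (g ^ b)).Coprime (orderOf (g ^ a)) := by rwa [hga, hgb]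
  intro hB
  have hsize := hB {g} {g ^ b, g ^ a} (isMinimalGenSet_singleton hg hg1)
    (isMinimalGenSet_pair hcop (hga ▸ ha) (hgb ▸ hb) (by rw [hga, hgb, hcard]))
  rw [Set.ncard_singleton, Set.ncard_pair (ne_of_coprime_orderOf hcop (hga ▸ ha))] at hsize
  omega

end Cyclic

theorem cyclic_B_group_iff_prime_power (G : Type*) [Group G] [Finite G]
    (hG : IsCyclic G) :
    HasPropB G ↔ ∃ (p k : ℕ), p.Prime ∧ Nat.card G = p ^ k := by
  refine ⟨fun hB => by_contra fun hpow => ?_,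
    fun ⟨p, k, hp, hcard⟩ => IsCyclic.hasPropB_of_card_eq_prime_pow hp hcard⟩
  obtain ⟨a, b, ha, hb, hab, hcard⟩ :=
    Nat.exists_coprime_mul_eq_of_not_prime_power Nat.card_pos.ne' hpow
  exact IsCyclic.not_hasPropB_of_coprime_mul_eq_card ha hb hab hcard hB
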